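/- Let Xₙ be compact Hausdorff spaces and Bₙ : C(Xₙ₋₁) → C(Xₙ) Markovian operators, and suppose the coherent state space S = {(τₙ) : τₙ state on C(Xₙ), τₙ₋₁ = τₙ∘Bₙ} consists of a single element ν = (νₙ). If f ∈ C(X₀) satisfies ν₀(f) = 0, then ‖Bₙ⋯B₁ f‖ → 0 as n → ∞. -/
import Mathlib

open Filter

/-- Iterates `B (m+n-1) ∘ ⋯ ∘ B m` applied to `f : C(X m, ℝ)`. -/
def iterB {X : ℕ → Type*} [∀ n, TopologicalSpace (X n)]
    (B : ∀ n, C(X n, ℝ) →L[ℝ] C(X (n + 1), ℝ)) (m : ℕ) (f : C(X m, ℝ)) :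
    ∀ n, C(X (m + n), ℝ)
  | 0 => f
  | n + 1 => B (m + n) (iterB B m f n)

section Aux

variable {X : ℕ → Type*} [∀ n, TopologicalSpace (X n)]
variable (B : ∀ n, C(X n, ℝ) →L[ℝ] C(X (n + 1), ℝ))

lemma iterB_add (m : ℕ) (f g : C(X m, ℝ)) (n : ℕ) :
    iterB B m (f + g) n = iterB B m f n + iterB B m g n := by
  induction n with
  | zero => rfl
  | succ n ih => simp [iterB, ih, map_add]

lemma iterB_smul (m : ℕ) (c : ℝ) (f : C(X m, ℝ)) (n : ℕ) :
    iterB B m (c • f) n = c • iterB B m f n := by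
  induction n with
  | zero => rfl
  | succ n ih => simp [iterB, ih, map_smul]

lemma iterB_pos (hBpos : ∀ n (f : C(X n, ℝ)), (∀ x, 0 ≤ f x) → ∀ y, 0 ≤ B n f y)
    (m : ℕ) (f : C(X m, ℝ)) (hf : ∀ x, 0 ≤ f x) (n : ℕ) :
    ∀ y, 0 ≤ iterB B m f n y := by
  induction n with
  | zero => exact hf
  | succ n ih => exact hBpos _ _ ih

lemma iterB_one (hBone : ∀ n, B n 1 = 1) (m : ℕ) (n : ℕ) :
    iterB B m (1 : C(X m, ℝ)) n = 1 := by
  induction n with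
  | zero => rfl
  | succ n ih => simp [iterB, ih, hBone]

/-- congruence helper. -/
lemma Bapp_heq {m m' : ℕ} (e : m = m') {a : C(X m, ℝ)} {a' : C(X m', ℝ)}
    (h : HEq a a') : HEq (B m a) (B m' a') := by
  subst e; rw [eq_of_heq h]

lemma iterB_shift (n : ℕ) (g : C(X n, ℝ)) :
    ∀ k, HEq (iterB B (n + 1) (B n g) k) (iterB B n g (k + 1))
  | 0 => HEq.rfl
  | k + 1 => by
    show HEq (B (n + 1 + k) (iterB B (n+1) (B n g) k)) (B (n + (k+1)) (iterB B n g (k+1)))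
    exact Bapp_heq B (by omega) (iterB_shift n g k)

lemma eval_congr {m m' : ℕ} (e : m = m') {a : C(X m, ℝ)} {a' : C(X m', ℝ)}
    (ha : HEq a a') {p : X m} {p' : X m'} (hp : HEq p p') : a p = a' p' := by
  subst e; rw [eq_of_heq ha, eq_of_heq hp]

variable [∀ n, CompactSpace (X n)]

lemma norm_B_le (hBpos : ∀ n (f : C(X n, ℝ)), (∀ x, 0 ≤ f x) → ∀ y, 0 ≤ B n f y)
    (hBone : ∀ n, B n 1 = 1) (n : ℕ) (h : C(X n, ℝ)) : ‖B n h‖ ≤ ‖h‖ := by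
  rw [ContinuousMap.norm_le _ (norm_nonneg h)]
  intro y
  have h1 : ∀ x, 0 ≤ ((‖h‖ • (1 : C(X n, ℝ))) - h) x := by
    intro x
    have := h.norm_coe_le_norm x
    simp only [ContinuousMap.sub_apply, ContinuousMap.smul_apply, ContinuousMap.one_apply,
      smul_eq_mul, mul_one]
    rw [Real.norm_eq_abs, abs_le] at this
    linarith [this.2]
  have h2 : ∀ x, 0 ≤ (h + (‖h‖ • (1 : C(X n, ℝ)))) x := by
    intro x
    have := h.norm_coe_le_norm x
    simp only [ContinuousMap.add_apply, ContinuousMap.smul_apply, ContinuousMap.one_apply,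
      smul_eq_mul, mul_one]
    rw [Real.norm_eq_abs, abs_le] at this
    linarith [this.1]
  have k1 := hBpos n _ h1 y
  have k2 := hBpos n _ h2 y
  rw [map_sub, map_smul, hBone] at k1
  rw [map_add, map_smul, hBone] at k2
  simp only [ContinuousMap.sub_apply, ContinuousMap.add_apply, ContinuousMap.smul_apply,
    ContinuousMap.one_apply, smul_eq_mul, mul_one] at k1 k2
  rw [Real.norm_eq_abs, abs_le]
  constructor <;> linarith

lemma norm_iterB_le (hBpos : ∀ n (f : C(X n, ℝ)), (∀ x, 0 ≤ f x) → ∀ y, 0 ≤ B n f y)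
    (hBone : ∀ n, B n 1 = 1) (m : ℕ) (f : C(X m, ℝ)) (n : ℕ) :
    ‖iterB B m f n‖ ≤ ‖f‖ := by
  induction n with
  | zero => exact le_refl _
  | succ n ih => exact le_trans (norm_B_le B hBpos hBone _ _) ih

/-- Evaluation of the iterate starting at stage `n`, at the point `x N` of stage `N ≥ n`. -/
noncomputable def E (x : ∀ N, X N) (n : ℕ) (g : C(X n, ℝ)) (N : ℕ) : ℝ :=
  if h : n ≤ N then
    iterB B n g (N - n) (cast (congrArg X (by omega : N = n + (N - n))) (x N))
  else 0

lemma E_coh (x : ∀ N, X N) (n : ℕ) (g : C(X n, ℝ)) {N : ℕ} (hN : n + 1 ≤ N) :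
    E B x n g N = E B x (n + 1) (B n g) N := by
  rw [E, E, dif_pos (by omega : n ≤ N), dif_pos hN]
  have ha : HEq (iterB B n g (N - n)) (iterB B (n + 1) (B n g) (N - (n + 1))) := by
    rw [show N - n = (N - (n + 1)) + 1 from by omega]
    exact (iterB_shift B n g (N - (n + 1))).symm
  exact eval_congr (by omega) ha
    (((cast_heq _ _).trans (cast_heq _ _).symm))

lemma E_abs_le (x : ∀ N, X N)
    (hBpos : ∀ n (f : C(X n, ℝ)), (∀ x, 0 ≤ f x) → ∀ y, 0 ≤ B n f y)
    (hBone : ∀ n, B n 1 = 1) (n : ℕ) (g : C(X n, ℝ)) (N : ℕ) :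
    |E B x n g N| ≤ ‖g‖ := by
  rw [E]
  split
  · refine le_trans ?_ (norm_iterB_le B hBpos hBone n g (N - n))
    rw [← Real.norm_eq_abs]
    exact ContinuousMap.norm_coe_le_norm _ _
  · simpa using norm_nonneg g

lemma E_pos (x : ∀ N, X N)
    (hBpos : ∀ n (f : C(X n, ℝ)), (∀ x, 0 ≤ f x) → ∀ y, 0 ≤ B n f y)
    (n : ℕ) (g : C(X n, ℝ)) (hg : ∀ z, 0 ≤ g z) (N : ℕ) : 0 ≤ E B x n g N := by
  rw [E]; split
  · exact iterB_pos B hBpos n g hg _ _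
  · exact le_refl _

lemma E_one (x : ∀ N, X N) (hBone : ∀ n, B n 1 = 1) (n : ℕ) {N : ℕ} (hN : n ≤ N) :
    E B x n (1 : C(X n, ℝ)) N = 1 := by
  rw [E, dif_pos hN, iterB_one B hBone]
  rfl

lemma E_add (x : ∀ N, X N) (n : ℕ) (g g' : C(X n, ℝ)) (N : ℕ) :
    E B x n (g + g') N = E B x n g N + E B x n g' N := by
  rw [E, E, E]
  split
  · rw [iterB_add]; rfl
  · ring

lemma E_smul (x : ∀ N, X N) (n : ℕ) (c : ℝ) (g : C(X n, ℝ)) (N : ℕ) :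
    E B x n (c • g) N = c • E B x n g N := by
  rw [E, E]
  split
  · rw [iterB_smul]; rfl
  · simp

end Aux

section LimU

open Classical in
/-- The limit of a sequence along an ultrafilter (junk value if no limit exists). -/
noncomputable def limU (U : Ultrafilter ℕ) (u : ℕ → ℝ) : ℝ :=
  if h : ∃ L, Tendsto u (U : Filter ℕ) (nhds L) then h.choose else 0

lemma exists_limU (U : Ultrafilter ℕ) {u : ℕ → ℝ} {M : ℝ} (hu : ∀ N, |u N| ≤ M) :
    ∃ L, Tendsto u (U : Filter ℕ) (nhds L) := by
  have hmem : ∀ N, u N ∈ Set.Icc (-M) M := fun N => by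
    have := hu N; rw [abs_le] at this; exact ⟨this.1, this.2⟩
  obtain ⟨L, _, hL⟩ := (isCompact_Icc (a := -M) (b := M)).ultrafilter_le_nhds
    (Ultrafilter.map u U) (by
      rw [Ultrafilter.coe_map, le_principal_iff, mem_map]
      filter_upwards with N using hmem N)
  exact ⟨L, by rwa [Ultrafilter.coe_map] at hL⟩

lemma tendsto_limU (U : Ultrafilter ℕ) {u : ℕ → ℝ} {M : ℝ} (hu : ∀ N, |u N| ≤ M) :
    Tendsto u (U : Filter ℕ) (nhds (limU U u)) := by
  have h := exists_limU U hu
  rw [limU, dif_pos h]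
  exact h.choose_spec

end LimU

/-- if the coherent state space is a singleton {ν} and ν₀(f) = 0,
then ‖Bₙ⋯B₁ f‖ → 0. -/
theorem stmt15 {X : ℕ → Type*} [∀ n, TopologicalSpace (X n)] [∀ n, CompactSpace (X n)]
    [∀ n, T2Space (X n)] [∀ n, Nonempty (X n)]
    (B : ∀ n, C(X n, ℝ) →L[ℝ] C(X (n + 1), ℝ))
    (hBpos : ∀ n (f : C(X n, ℝ)), (∀ x, 0 ≤ f x) → ∀ y, 0 ≤ B n f y)
    (hBone : ∀ n, B n 1 = 1)
    (ν : ∀ n, C(X n, ℝ) →ₗ[ℝ] ℝ)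
    (hνpos : ∀ n (g : C(X n, ℝ)), (∀ x, 0 ≤ g x) → 0 ≤ ν n g)
    (hνone : ∀ n, ν n 1 = 1)
    (hνcoh : ∀ n (g : C(X n, ℝ)), ν n g = ν (n + 1) (B n g))
    (huniq : ∀ τ : ∀ n, C(X n, ℝ) →ₗ[ℝ] ℝ,
      (∀ n (g : C(X n, ℝ)), (∀ x, 0 ≤ g x) → 0 ≤ τ n g) →
      (∀ n, τ n 1 = 1) →
      (∀ n (g : C(X n, ℝ)), τ n g = τ (n + 1) (B n g)) → τ = ν)
    (f : C(X 0, ℝ)) (hf : ν 0 f = 0) :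
    Tendsto (fun n => ‖iterB B 0 f n‖) atTop (nhds 0) := by
  set a : ℕ → ℝ := fun N => ‖iterB B 0 f N‖ with ha
  have hanti : Antitone a := by
    apply antitone_nat_of_succ_le
    intro N
    exact norm_B_le B hBpos hBone _ _
  have hbdd : BddBelow (Set.range a) := ⟨0, by rintro _ ⟨N, rfl⟩; exact norm_nonneg _⟩
  set L : ℝ := ⨅ N, a N with hLdef
  have htend : Tendsto a atTop (nhds L) := tendsto_atTop_ciInf hanti hbdd
  have hL0 : 0 ≤ L := le_ciInf fun N => norm_nonneg _
  have hLle : ∀ N, L ≤ a N := fun N => ciInf_le hbdd N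
  suffices hLz : L = 0 by rw [hLz] at htend; exact htend
  by_contra hne
  have hLpos : 0 < L := lt_of_le_of_ne hL0 (Ne.symm hne)
  -- choose norm-attaining points
  have hex : ∀ N, ∃ y : X (0 + N), |iterB B 0 f N y| = a N := by
    intro N
    obtain ⟨z, _, hz⟩ := isCompact_univ.exists_isMaxOn (Set.univ_nonempty)
      ((map_continuous (iterB B 0 f N)).abs.continuousOn
        (s := (Set.univ : Set (X (0 + N)))))
    refine ⟨z, le_antisymm ?_ ?_⟩
    · rw [← Real.norm_eq_abs]; exact ContinuousMap.norm_coe_le_norm _ _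
    · rw [ContinuousMap.norm_le _ (abs_nonneg _)]
      intro w
      rw [Real.norm_eq_abs]
      exact hz (Set.mem_univ w)
  choose y hy using hex
  set x : ∀ N, X N := fun N => cast (congrArg X (zero_add N)) (y N) with hx
  have hE0 : ∀ N, E B x 0 f N = iterB B 0 f N (y N) := by
    intro N
    rw [E, dif_pos (Nat.zero_le N)]
    refine congrArg (fun z => iterB B 0 f (N - 0) z) ?_
    rw [hx, cast_cast]
    exact cast_eq_iff_heq.mpr HEq.rfl
  -- an ultrafilter extending atTop
  set U : Ultrafilter ℕ := Ultrafilter.of atTop with hU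
  have hUat : (U : Filter ℕ) ≤ atTop := Ultrafilter.of_le atTop
  -- the limit state
  set τ : ∀ n, C(X n, ℝ) →ₗ[ℝ] ℝ := fun n =>
    { toFun := fun g => limU U (E B x n g)
      map_add' := by
        intro g g'
        refine tendsto_nhds_unique (tendsto_limU U (E_abs_le B x hBpos hBone n (g + g')))
          ?_
        have := (tendsto_limU U (E_abs_le B x hBpos hBone n g)).add
          (tendsto_limU U (E_abs_le B x hBpos hBone n g'))
        refine this.congr fun N => (E_add B x n g g' N).symm
      map_smul' := by
        intro c g
        refine tendsto_nhds_unique (tendsto_limU U (E_abs_le B x hBpos hBone n (c • g))) ?_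
        have := (tendsto_limU U (E_abs_le B x hBpos hBone n g)).const_smul c
        exact this.congr fun N => (E_smul B x n c g N).symm } with hτ
  have hτval : ∀ n (g : C(X n, ℝ)), τ n g = limU U (E B x n g) := fun _ _ => rfl
  have hτpos : ∀ n (g : C(X n, ℝ)), (∀ z, 0 ≤ g z) → 0 ≤ τ n g := by
    intro n g hg
    rw [hτval]
    exact ge_of_tendsto (tendsto_limU U (E_abs_le B x hBpos hBone n g))
      (Eventually.of_forall (E_pos B x hBpos n g hg))
  have hτone : ∀ n, τ n 1 = 1 := by
    intro n
    rw [hτval]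
    refine tendsto_nhds_unique (tendsto_limU U (E_abs_le B x hBpos hBone n 1)) ?_
    have hev : ∀ᶠ N in (U : Filter ℕ), E B x n (1 : C(X n, ℝ)) N = 1 :=
      Eventually.filter_mono hUat (eventually_atTop.mpr ⟨n, fun N hN => E_one B x hBone n hN⟩)
    exact tendsto_const_nhds.congr' (by filter_upwards [hev] with N h using h.symm)
  have hτcoh : ∀ n (g : C(X n, ℝ)), τ n g = τ (n + 1) (B n g) := by
    intro n g
    rw [hτval, hτval]
    refine tendsto_nhds_unique ?_ (tendsto_limU U (E_abs_le B x hBpos hBone (n + 1) (B n g)))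
    have hev : ∀ᶠ N in (U : Filter ℕ), E B x (n + 1) (B n g) N = E B x n g N :=
      Eventually.filter_mono hUat (eventually_atTop.mpr
        ⟨n + 1, fun N hN => (E_coh B x n g hN).symm⟩)
    exact (tendsto_limU U (E_abs_le B x hBpos hBone n g)).congr' (by
      filter_upwards [hev] with N h using h.symm)
  have hτν : τ = ν := huniq τ hτpos hτone hτcoh
  have hτ0 : τ 0 f = 0 := by rw [hτν]; exact hf
  -- sign dichotomy
  have habs : ∀ N, L ≤ |E B x 0 f N| := by
    intro N; rw [hE0 N, hy N]; exact hLle N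
  set S : Set ℕ := {N | L ≤ E B x 0 f N} with hS
  rcases U.mem_or_compl_mem S with hmem | hmem
  · have : L ≤ τ 0 f := by
      rw [hτval]
      exact ge_of_tendsto (tendsto_limU U (E_abs_le B x hBpos hBone 0 f)) hmem
    rw [hτ0] at this; linarith
  · have hcompl : ∀ N ∈ Sᶜ, E B x 0 f N ≤ -L := by
      intro N hN
      have h1 : ¬ L ≤ E B x 0 f N := hN
      have := habs N
      rcases abs_cases (E B x 0 f N) with ⟨h2, _⟩ | ⟨h2, _⟩ <;> [linarith; linarith]
    have : τ 0 f ≤ -L := by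
      rw [hτval]
      refine le_of_tendsto (tendsto_limU U (E_abs_le B x hBpos hBone 0 f)) ?_
      filter_upwards [hmem] with N hN using hcompl N hN
    rw [hτ0] at this; linarith
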